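/- arXiv:1807.08065 — 2 statements merged into one kernel-verified Lean document; each statement's English description precedes it below -/
import Mathlib

section
/- Let T be a minimum spanning tree of V, let V = V_b ∪ V_r be any partition of V into two nonempty classes, and let T_b and T_r be minimum spanning trees of V_b and V_r respectively. Then c(T_b) + c(T_r) ≤ 3·c(T). -/
open scoped Classical

noncomputable def cost {α : Type*} [Fintype α] (w : α → α → ℝ) (G : SimpleGraph α) : ℝ :=
  (∑ u : α, ∑ v : α, if G.Adj u v then w u v else 0) / 2

/-- `G` is a minimum spanning tree for the weight function `w`. -/
def IsMST {α : Type*} [Fintype α] (w : α → α → ℝ) (G : SimpleGraph α) : Prop :=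
  G.IsTree ∧ ∀ G' : SimpleGraph α, G'.IsTree → cost w G ≤ cost w G'

/-- Cost of a graph on the subtype of a subset `S`, w.r.t. the restricted weights. -/
noncomputable def subCost {V : Type*} [Fintype V] (w : V → V → ℝ) (S : Set V)
    (G : SimpleGraph S) : ℝ :=
  cost (fun u v : S => w u.1 v.1) G

/-- `G` is a minimum spanning tree of the subset `S` w.r.t. the restricted weights. -/
def IsSubMST {V : Type*} [Fintype V] (w : V → V → ℝ) (S : Set V) (G : SimpleGraph S) : Prop :=
  IsMST (fun u v : S => w u.1 v.1) G

/-!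
Root `T` at a vertex `ρ` and split it at an edge `ρc` into the subtrees at `ρ` and at `c`. By
induction, the colour class of the root is connected by a graph of cost `a`, and the other class
by a graph of cost `b - w ρ p - w ρ q` for two "ports" `p`, `q` of that class, with
`a + b ≤ 3 c(T)`. Gluing along `ρc` pays `w ρ c` once for the root's colour (joining `ρ` to a
port of the subtree at `c`, via `c`) and twice for the other colour (joining a port of one
subtree to a port of the other via `ρ` and `c`, and rerouting the remaining port of the subtree
at `c` through `c`). So every edge of `T` is paid at most three times. Nonnegative weights make a
connected graph on a colour class at least as expensive as a spanning tree inside it.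
-/

open SimpleGraph Set.Notation

section Cost

variable {α : Type*} [Fintype α] {w : α → α → ℝ} {G H : SimpleGraph α}

lemma cost_bot : cost w ⊥ = 0 := by
  simp [cost]

lemma cost_mono (hw : ∀ u v, 0 ≤ w u v) (h : G ≤ H) : cost w G ≤ cost w H := by
  unfold cost
  gcongr with u _ v _
  split_ifs with hG hH
  exacts [le_rfl, (hH (h hG)).elim, hw u v, le_rfl]

lemma cost_nonneg (hw : ∀ u v, 0 ≤ w u v) : 0 ≤ cost w G :=
  cost_bot.symm.trans_le (cost_mono hw bot_le)

lemma cost_sup_of_disjoint (h : Disjoint G H) : cost w (G ⊔ H) = cost w G + cost w H := by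
  simp only [cost, ← add_div, ← Finset.sum_add_distrib]
  congr 1
  refine Finset.sum_congr rfl fun u _ => Finset.sum_congr rfl fun v _ => ?_
  have : ¬ (G.Adj u v ∧ H.Adj u v) := fun hGH => h.le_bot hGH
  by_cases hG : G.Adj u v <;> by_cases hH : H.Adj u v <;> simp_all

lemma cost_sup_le (hw : ∀ u v, 0 ≤ w u v) : cost w (G ⊔ H) ≤ cost w G + cost w H := by
  rw [← sup_sdiff_self_right, cost_sup_of_disjoint disjoint_sdiff_self_right]
  gcongr
  exact cost_mono hw sdiff_le

lemma cost_edge (hself : ∀ v, w v v = 0) (hsymm : ∀ u v, w u v = w v u) (x y : α) :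
    cost w (edge x y) = w x y := by
  rcases eq_or_ne x y with rfl | hxy
  · rw [edge_self_eq_bot, cost_bot, hself]
  rw [cost, div_eq_iff two_ne_zero]
  calc _ = ∑ u, ∑ v, ((if u = x ∧ v = y then w x y else 0)
        + (if u = y ∧ v = x then w x y else 0)) :=
        Finset.sum_congr rfl fun u _ => Finset.sum_congr rfl fun v _ => ?_
    _ = w x y * 2 := by
        simp [Finset.sum_add_distrib, ite_and]
        ring
  by_cases hadj : (edge x y).Adj u v
  · rw [if_pos hadj]
    rcases ((edge_adj x y u v).1 hadj).1 with ⟨rfl, rfl⟩ | ⟨rfl, rfl⟩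
    · simp [hxy]
    · simp [hxy, hsymm u v]
  · rw [if_neg hadj]
    rw [edge_adj] at hadj
    have h₁ : ¬ (u = x ∧ v = y) := fun h => hadj ⟨Or.inl h, h.1 ▸ h.2 ▸ hxy⟩
    have h₂ : ¬ (u = y ∧ v = x) := fun h => hadj ⟨Or.inr h, h.1 ▸ h.2 ▸ hxy.symm⟩
    rw [if_neg h₁, if_neg h₂, add_zero]

end Cost

namespace SimpleGraph

variable {α : Type*}

def Connects (H : SimpleGraph α) (s : Set α) : Prop :=
  ∀ ⦃u⦄, u ∈ s → ∀ ⦃v⦄, v ∈ s → H.Reachable u v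

lemma connects_of_subsingleton {H : SimpleGraph α} {s : Set α} (hs : s.Subsingleton) :
    H.Connects s :=
  fun _ hu _ hv => hs hu hv ▸ Reachable.refl _

lemma Connects.subset {H : SimpleGraph α} {s t : Set α} (h : H.Connects s) (hts : t ⊆ s) :
    H.Connects t :=
  fun _ hu _ hv => h (hts hu) (hts hv)

lemma Connects.sup_edge {H₁ H₂ : SimpleGraph α} {s t : Set α} {x y : α}
    (h₁ : H₁.Connects s) (h₂ : H₂.Connects t) (hx : x ∈ s) (hy : y ∈ t) :
    (H₁ ⊔ H₂ ⊔ edge x y).Connects (s ∪ t) := by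
  suffices hreach : ∀ u ∈ s ∪ t, (H₁ ⊔ H₂ ⊔ edge x y).Reachable x u from
    fun u hu v hv => (hreach u hu).symm.trans (hreach v hv)
  rintro u (hu | hu)
  · exact (h₁ hx hu).mono (le_sup_left.trans le_sup_left)
  · have hxy : (H₁ ⊔ H₂ ⊔ edge x y).Reachable x y := by
      rcases eq_or_ne x y with rfl | hne
      · rfl
      · exact Adj.reachable (Or.inr ((edge_adj x y x y).2 ⟨Or.inl ⟨rfl, rfl⟩, hne⟩))
    exact hxy.trans ((h₂ hy hu).mono (le_sup_right.trans le_sup_left))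

lemma Connects.connected [Nonempty α] {H : SimpleGraph α} (h : H.Connects Set.univ) :
    H.Connected :=
  .mk fun u v => h (Set.mem_univ u) (Set.mem_univ v)

lemma Reachable.mem_of_adj_closed {G : SimpleGraph α} {s : Set α}
    (hs : ∀ ⦃u v⦄, G.Adj u v → u ∈ s → v ∈ s) {u v : α} (h : G.Reachable u v) (hu : u ∈ s) :
    v ∈ s := by
  obtain ⟨p⟩ := h
  induction p with
  | nil => exact hu
  | cons hadj _ ih => exact ih (hs hadj hu)

lemma setOf_reachable_eq_singleton {G : SimpleGraph α} {ρ : α} (h : ∀ c, ¬ G.Adj ρ c) :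
    {v | G.Reachable ρ v} = {ρ} := by
  ext v
  refine ⟨fun ⟨p⟩ => ?_, fun hv => hv ▸ Reachable.refl ρ⟩
  cases p with
  | nil => rfl
  | cons hadj _ => exact (h _ hadj).elim

lemma setOf_reachable_eq_union_sdiff_edge {G : SimpleGraph α} {ρ c : α} (hρc : G.Adj ρ c) :
    {v | G.Reachable ρ v} =
      {v | (G \ edge ρ c).Reachable ρ v} ∪ {v | (G \ edge ρ c).Reachable c v} := by
  ext v
  refine ⟨fun h => h.mem_of_adj_closed ?_ (.inl (Reachable.refl ρ)), ?_⟩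
  · intro u v huv hu
    by_cases h' : (G \ edge ρ c).Adj u v
    · exact hu.imp (·.trans h'.reachable) (·.trans h'.reachable)
    · have : (edge ρ c).Adj u v := by simpa [huv] using h'
      rcases ((edge_adj _ _ _ _).1 this).1 with ⟨-, rfl⟩ | ⟨-, rfl⟩
      exacts [.inr (Reachable.refl _), .inl (Reachable.refl _)]
  · rintro (h | h)
    · exact h.mono sdiff_le
    · exact hρc.reachable.trans (h.mono sdiff_le)

def componentGraph (G : SimpleGraph α) (ρ : α) : SimpleGraph α where
  Adj u v := G.Adj u v ∧ G.Reachable ρ u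
  symm := ⟨fun _ _ h => ⟨h.1.symm, h.2.trans h.1.reachable⟩⟩
  loopless := ⟨fun _ h => h.1.ne rfl⟩

lemma componentGraph_le (G : SimpleGraph α) (ρ : α) : G.componentGraph ρ ≤ G :=
  fun _ _ h => h.1

end SimpleGraph

lemma Set.inter_union_subset_left_of_disjoint {α : Type*} {X S S' : Set α}
    (h : Disjoint X S') : X ∩ (S ∪ S') ⊆ S := by
  rintro u ⟨huX, hu | hu⟩
  exacts [hu, (Set.disjoint_left.1 h huX hu).elim]

section Spans

variable {V : Type*} [Fintype V] {w : V → V → ℝ} {X S S' : Set V} {a b : ℝ}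

def Spans (w : V → V → ℝ) (X S : Set V) (a : ℝ) : Prop :=
  ∃ H : SimpleGraph X, H.Connects (X ↓∩ S) ∧ subCost w X H ≤ a

/-- Used for a colour class `X` avoiding the root `ρ` of `S`: the ports `p`, `q` are where the
class is later attached to the neighbouring parts of the tree, in both cases via `ρ`. -/
def SpansWithPorts (w : V → V → ℝ) (X S : Set V) (ρ : V) (a : ℝ) : Prop :=
  Disjoint X S ∧ 0 ≤ a ∨ ∃ p ∈ X ∩ S, ∃ q ∈ X ∩ S, Spans w X S (a - w ρ p - w ρ q)

lemma Spans.mono (h : Spans w X S a) (hS : X ∩ S' ⊆ S) (hab : a ≤ b) : Spans w X S' b := by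
  obtain ⟨H, hH, hcost⟩ := h
  exact ⟨H, hH.subset fun u hu => hS ⟨u.2, hu⟩, hcost.trans hab⟩

lemma Spans.glue (hself : ∀ v, w v v = 0) (hsymm : ∀ u v, w u v = w v u)
    (hnonneg : ∀ u v, 0 ≤ w u v) {x y : V} (h : Spans w X S a) (h' : Spans w X S' b)
    (hx : x ∈ X ∩ S) (hy : y ∈ X ∩ S') : Spans w X (S ∪ S') (a + b + w x y) := by
  obtain ⟨H, hH, hcost⟩ := h
  obtain ⟨H', hH', hcost'⟩ := h'
  let x' : X := ⟨x, hx.1⟩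
  let y' : X := ⟨y, hy.1⟩
  refine ⟨H ⊔ H' ⊔ edge x' y', hH.sup_edge hH' hx.2 hy.2, ?_⟩
  have hnonneg' : ∀ u v : X, 0 ≤ w u v := fun u v => hnonneg u v
  have hsup : subCost w X (H ⊔ H' ⊔ edge x' y')
      ≤ subCost w X (H ⊔ H') + subCost w X (edge x' y') := cost_sup_le hnonneg'
  have hsup' : subCost w X (H ⊔ H') ≤ subCost w X H + subCost w X H' := cost_sup_le hnonneg'
  have hedge : subCost w X (edge x' y') = w x y :=
    cost_edge (w := fun u v : X => w u v) (fun v => hself v) (fun u v => hsymm u v) x' y'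
  linarith

lemma Spans.spansWithPorts (hself : ∀ v, w v v = 0) {ρ : V} (h : Spans w X S a)
    (hρ : ρ ∈ X ∩ S) : SpansWithPorts w X S ρ a :=
  .inr ⟨ρ, hρ, ρ, hρ, by simpa [hself] using h⟩

lemma SpansWithPorts.spans (hnonneg : ∀ u v, 0 ≤ w u v) {ρ : V}
    (h : SpansWithPorts w X S ρ a) (hne : (X ∩ S).Nonempty) : Spans w X S a := by
  rcases h with ⟨hd, -⟩ | ⟨p, -, q, -, h⟩
  · exact (hne.not_disjoint hd).elim
  · exact h.mono Set.inter_subset_right (by linarith [hnonneg ρ p, hnonneg ρ q])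

lemma Spans.glue_spansWithPorts (hself : ∀ v, w v v = 0) (hsymm : ∀ u v, w u v = w v u)
    (hnonneg : ∀ u v, 0 ≤ w u v) (htri : ∀ u v x, w u v ≤ w u x + w x v) {ρ c : V}
    (h : Spans w X S a) (hρ : ρ ∈ X ∩ S) (h' : SpansWithPorts w X S' c b) :
    Spans w X (S ∪ S') (a + b + w ρ c) := by
  rcases h' with ⟨hd, hb⟩ | ⟨p, hp, q, -, h'⟩
  · exact h.mono (Set.inter_union_subset_left_of_disjoint hd) (by linarith [hnonneg ρ c])
  · refine (h.glue hself hsymm hnonneg h' hρ hp).mono Set.inter_subset_right ?_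
    linarith [htri ρ p c, hnonneg c q]

lemma SpansWithPorts.glue (hself : ∀ v, w v v = 0) (hsymm : ∀ u v, w u v = w v u)
    (hnonneg : ∀ u v, 0 ≤ w u v) (htri : ∀ u v x, w u v ≤ w u x + w x v) {ρ c : V}
    (h : SpansWithPorts w X S ρ a) (h' : SpansWithPorts w X S' c b) :
    SpansWithPorts w X (S ∪ S') ρ (a + b + 2 * w ρ c) := by
  rcases h with ⟨hd, ha⟩ | ⟨p, hp, q, hq, h⟩ <;>
    rcases h' with ⟨hd', hb⟩ | ⟨p', hp', q', hq', h'⟩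
  · exact .inl ⟨hd.union_right hd', by linarith [hnonneg ρ c]⟩
  · refine .inr ⟨p', ⟨hp'.1, .inr hp'.2⟩, q', ⟨hq'.1, .inr hq'.2⟩, ?_⟩
    refine h'.mono (Set.union_comm S S' ▸ Set.inter_union_subset_left_of_disjoint hd) ?_
    linarith [htri ρ p' c, htri ρ q' c]
  · refine .inr ⟨p, ⟨hp.1, .inl hp.2⟩, q, ⟨hq.1, .inl hq.2⟩, ?_⟩
    exact h.mono (Set.inter_union_subset_left_of_disjoint hd') (by linarith [hnonneg ρ c])
  · refine .inr ⟨p, ⟨hp.1, .inl hp.2⟩, q', ⟨hq'.1, .inr hq'.2⟩, ?_⟩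
    refine (h.glue hself hsymm hnonneg h' hq hp').mono Set.inter_subset_right ?_
    linarith [htri q p' ρ, htri ρ p' c, htri ρ q' c, hsymm q ρ]

end Spans

section Induction

variable {V : Type*} [Fintype V] {w : V → V → ℝ}

lemma exists_spansWithPorts_of_forall_spans (hself : ∀ v, w v v = 0) {S : Set V} {ρ : V}
    (hρ : ρ ∈ S) {B : ℝ}
    (h : ∀ X : Set V, ρ ∈ X → ∃ a b, a + b ≤ B ∧ Spans w X S a ∧ SpansWithPorts w Xᶜ S ρ b)
    (X : Set V) :
    ∃ a b, a + b ≤ B ∧ SpansWithPorts w X S ρ a ∧ SpansWithPorts w Xᶜ S ρ b := by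
  by_cases hX : ρ ∈ X
  · obtain ⟨a, b, hab, ha, hb⟩ := h X hX
    exact ⟨a, b, hab, ha.spansWithPorts hself ⟨hX, hρ⟩, hb⟩
  · obtain ⟨a, b, hab, ha, hb⟩ := h Xᶜ hX
    exact ⟨b, a, by linarith, compl_compl X ▸ hb, ha.spansWithPorts hself ⟨hX, hρ⟩⟩

lemma SimpleGraph.IsAcyclic.cost_componentGraph_sdiff_edge_le (hself : ∀ v, w v v = 0)
    (hsymm : ∀ u v, w u v = w v u) (hnonneg : ∀ u v, 0 ≤ w u v) {G : SimpleGraph V}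
    (hG : G.IsAcyclic) {ρ c : V} (hρc : G.Adj ρ c) :
    cost w ((G \ edge ρ c).componentGraph ρ) + cost w ((G \ edge ρ c).componentGraph c) + w ρ c
      ≤ cost w (G.componentGraph ρ) := by
  set G' := G \ edge ρ c
  have hbridge : ¬ G'.Reachable ρ c :=
    isBridge_iff.1 (isAcyclic_iff_forall_adj_isBridge.1 hG hρc)
  have hdisj : Disjoint (G'.componentGraph ρ) (G'.componentGraph c) := by
    rw [disjoint_iff_inf_le]
    exact fun u v h => hbridge (h.1.2.trans h.2.2.symm)
  have hdisj_edge : Disjoint (G'.componentGraph ρ ⊔ G'.componentGraph c) (edge ρ c) :=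
    disjoint_sdiff_self_left.mono_left (sup_le (componentGraph_le _ _) (componentGraph_le _ _))
  have hle : G'.componentGraph ρ ⊔ G'.componentGraph c ⊔ edge ρ c ≤ G.componentGraph ρ := by
    refine sup_le (sup_le ?_ ?_) ?_
    · exact fun u v h => ⟨h.1.1, h.2.mono sdiff_le⟩
    · exact fun u v h => ⟨h.1.1, hρc.reachable.trans (h.2.mono sdiff_le)⟩
    · intro u v h
      rcases ((edge_adj _ _ _ _).1 h).1 with ⟨rfl, rfl⟩ | ⟨rfl, rfl⟩
      exacts [⟨hρc, Reachable.refl _⟩, ⟨hρc.symm, hρc.reachable⟩]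
  rw [← cost_sup_of_disjoint hdisj, ← cost_edge hself hsymm ρ c, ← cost_sup_of_disjoint hdisj_edge]
  exact cost_mono hnonneg hle

theorem SimpleGraph.IsAcyclic.exists_spans_spansWithPorts (hself : ∀ v, w v v = 0)
    (hsymm : ∀ u v, w u v = w v u) (hnonneg : ∀ u v, 0 ≤ w u v)
    (htri : ∀ u v x, w u v ≤ w u x + w x v) {G : SimpleGraph V} (hG : G.IsAcyclic) (ρ : V)
    (X : Set V) (hρ : ρ ∈ X) :
    ∃ a b, a + b ≤ 3 * cost w (G.componentGraph ρ) ∧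
      Spans w X {v | G.Reachable ρ v} a ∧ SpansWithPorts w Xᶜ {v | G.Reachable ρ v} ρ b := by
  induction G using WellFoundedLT.induction generalizing ρ X with
  | _ G ih =>
  by_cases hadj : ∃ c, G.Adj ρ c
  · obtain ⟨c, hρc⟩ := hadj
    have hlt : G \ edge ρ c < G := sdiff_lt ((edge_le_iff G).2 (.inr hρc))
      (ne_bot_iff_exists_adj.2 ⟨ρ, c, (edge_adj ρ c ρ c).2 ⟨.inl ⟨rfl, rfl⟩, hρc.ne⟩⟩)
    have ih' := ih _ hlt (hG.anti sdiff_le)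
    obtain ⟨a, b, hab, ha, hb⟩ := ih' ρ X hρ
    obtain ⟨a', b', hab', ha', hb'⟩ := exists_spansWithPorts_of_forall_spans hself
      (Reachable.refl c) (ih' c) X
    refine ⟨a + a' + w ρ c, b + b' + 2 * w ρ c, ?_, ?_, ?_⟩
    · linarith [hG.cost_componentGraph_sdiff_edge_le hself hsymm hnonneg hρc]
    · rw [setOf_reachable_eq_union_sdiff_edge hρc]
      exact ha.glue_spansWithPorts hself hsymm hnonneg htri ⟨hρ, Reachable.refl ρ⟩ ha'
    · rw [setOf_reachable_eq_union_sdiff_edge hρc]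
      exact hb.glue hself hsymm hnonneg htri hb'
  · push Not at hadj
    rw [setOf_reachable_eq_singleton hadj]
    refine ⟨0, 0, by linarith [cost_nonneg (G := G.componentGraph ρ) hnonneg], ?_, ?_⟩
    · exact ⟨⊥, connects_of_subsingleton
        (Set.subsingleton_singleton.preimage Subtype.val_injective), cost_bot.le⟩
    · exact .inl ⟨Set.disjoint_singleton_right.2 (· hρ), le_rfl⟩

end Induction

lemma IsSubMST.cost_le_of_spans {V : Type*} [Fintype V] {w : V → V → ℝ}
    (hnonneg : ∀ u v, 0 ≤ w u v) {X : Set V} {T : SimpleGraph X} (hT : IsSubMST w X T)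
    (hX : X.Nonempty) {a : ℝ} (h : Spans w X Set.univ a) : subCost w X T ≤ a := by
  obtain ⟨H, hH, hcost⟩ := h
  have : Nonempty X := hX.to_subtype
  obtain ⟨T', hT'H, hT'⟩ := (hH.subset (Set.subset_univ _) |>.connected).exists_isTree_le
  calc subCost w X T ≤ subCost w X T' := hT.2 T' hT'
    _ ≤ subCost w X H := cost_mono (fun u v => hnonneg u v) hT'H
    _ ≤ a := hcost

theorem stmt_0 {V : Type*} [Fintype V] (w : V → V → ℝ)
    (hw_self : ∀ v, w v v = 0)
    (hw_symm : ∀ u v, w u v = w v u)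
    (hw_nonneg : ∀ u v, 0 ≤ w u v)
    (hw_tri : ∀ u v x, w u v ≤ w u x + w x v)
    (T : SimpleGraph V) (hT : IsMST w T)
    (Vb Vr : Set V) (hunion : Vb ∪ Vr = Set.univ) (hdisj : Disjoint Vb Vr)
    (hbne : Vb.Nonempty) (hrne : Vr.Nonempty)
    (Tb : SimpleGraph Vb) (hTb : IsSubMST w Vb Tb)
    (Tr : SimpleGraph Vr) (hTr : IsSubMST w Vr Tr) :
    subCost w Vb Tb + subCost w Vr Tr ≤ 3 * cost w T := by
  obtain rfl : Vr = Vbᶜ := (IsCompl.compl_eq ⟨hdisj, codisjoint_iff.2 hunion⟩).symm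
  obtain ⟨ρ, hρ⟩ := hbne
  obtain ⟨a, b, hab, ha, hb⟩ := hT.1.isAcyclic.exists_spans_spansWithPorts hw_self hw_symm
    hw_nonneg hw_tri ρ Vb hρ
  have hcomp : {v | T.Reachable ρ v} = Set.univ :=
    Set.eq_univ_of_forall (hT.1.connected.preconnected ρ)
  rw [hcomp] at ha hb
  have hcostb := hTb.cost_le_of_spans hw_nonneg ⟨ρ, hρ⟩ ha
  have hcostr := hTr.cost_le_of_spans hw_nonneg hrne (hb.spans hw_nonneg (by simpa using hrne))
  linarith [cost_mono hw_nonneg (T.componentGraph_le ρ)]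
end

section
/- Let F be a 2-factor of G′ (a spanning subgraph of G′ in which every vertex has degree exactly 2) such that the length of every cycle of F is divisible by 6. Then F contains all dummy edges {p_i, d_i} and {q_i, d_i}; the set M of edges of F joining two real vertices is a perfect matching on the real vertices; and there exists a 2-coloring χ of the real vertices with colors red and blue such that χ(p_i) ≠ χ(q_i) for every i and every edge of M joins two vertices of the same color. (That is, any feasible C_{6×}-cover of G′ induces a feasible 2-matching.) -/
/-!
A dummy vertex `d i` has degree 2 in `F` and can only be adjacent to `p i` and `q i`, so `F` uses
both dummy edges. Hence every real vertex has its own dummy and exactly one real vertex as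
neighbours in `F`. Walking around a cycle of `F` from a dummy vertex, the vertices therefore
follow the pattern dummy, real, real, dummy, ..., i.e. the dummies sit exactly at the positions
divisible by 3. Colour a vertex red when its position is 0, 1 or 2 mod 6, which is well defined
because the length of the cycle is divisible by 6. A real edge joins positions 3j + 1 and 3j + 2,
which get the same colour, while the two neighbours 3j ± 1 of a dummy get different colours.
-/

namespace SimpleGraph

variable {V : Type*} {G : SimpleGraph V}

namespace Walk

variable {u : V} {w : G.Walk u u}

def cyclicVert (w : G.Walk u u) (k : ℕ) : V := w.getVert (k % w.length)

lemma cyclicVert_add_length (w : G.Walk u u) (k : ℕ) :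
    w.cyclicVert (k + w.length) = w.cyclicVert k := by
  simp [cyclicVert]

lemma exists_cyclicVert_eq {v : V} (hv : v ∈ w.support) : ∃ k, w.cyclicVert k = v := by
  obtain ⟨k, rfl, hk⟩ := mem_support_iff_exists_getVert.mp hv
  rcases hk.lt_or_eq with hk | rfl
  · exact ⟨k, by rw [cyclicVert, Nat.mod_eq_of_lt hk]⟩
  · exact ⟨0, by simp [cyclicVert]⟩

def redVerts (w : G.Walk u u) : Set V := {v | ∃ k, w.cyclicVert k = v ∧ k % 6 < 3}

namespace IsCycle

lemma cyclicVert_eq_iff (hw : w.IsCycle) {j k : ℕ} :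
    w.cyclicVert j = w.cyclicVert k ↔ j % w.length = k % w.length := by
  have hpos : 0 < w.length := by have := hw.three_le_length; omega
  have hmem (i : ℕ) : i % w.length ∈ {i | i ≤ w.length - 1} := by
    have := Nat.mod_lt i hpos
    simp only [Set.mem_ofPred_eq]
    omega
  exact ⟨fun h => hw.getVert_injOn' (hmem j) (hmem k) h,
    fun h => by rw [cyclicVert, cyclicVert, h]⟩

lemma adj_cyclicVert_succ (hw : w.IsCycle) (k : ℕ) :
    G.Adj (w.cyclicVert k) (w.cyclicVert (k + 1)) := by
  have := hw.three_le_length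
  have hk := Nat.mod_lt k (by omega : 0 < w.length)
  have hadj := w.adj_getVert_succ hk
  rw [cyclicVert, cyclicVert, Nat.add_mod, Nat.mod_eq_of_lt (a := 1) (by omega)]
  rcases (show k % w.length + 1 < w.length ∨ k % w.length + 1 = w.length by omega) with h | h
  · rwa [Nat.mod_eq_of_lt h]
  · rw [h] at hadj ⊢
    rw [Nat.mod_self, getVert_zero]
    rwa [w.getVert_length] at hadj

lemma cyclicVert_ne_cyclicVert_add_two (hw : w.IsCycle) (k : ℕ) :
    w.cyclicVert k ≠ w.cyclicVert (k + 2) := by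
  have := hw.three_le_length
  have hk := Nat.mod_lt k (by omega : 0 < w.length)
  rw [Ne, hw.cyclicVert_eq_iff, Nat.add_mod, Nat.mod_eq_of_lt (a := 2) (by omega)]
  rcases (show k % w.length + 2 < w.length ∨ w.length ≤ k % w.length + 2 by omega) with h | h
  · rw [Nat.mod_eq_of_lt h]; omega
  · rw [Nat.mod_eq_sub_mod h, Nat.mod_eq_of_lt (a := k % w.length + 2 - w.length) (by omega)]
    omega

lemma eq_or_eq_of_adj_cyclicVert (hG : G.IsCycles) (hw : w.IsCycle) {k : ℕ} {x : V}
    (hx : G.Adj (w.cyclicVert (k + 1)) x) : x = w.cyclicVert k ∨ x = w.cyclicVert (k + 2) := by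
  obtain ⟨y, -, hy⟩ := hG.existsUnique_ne_adj (hw.adj_cyclicVert_succ k).symm
  have hnext := hy _ ⟨hw.cyclicVert_ne_cyclicVert_add_two k, hw.adj_cyclicVert_succ (k + 1)⟩
  by_cases hxk : x = w.cyclicVert k
  · exact Or.inl hxk
  · exact Or.inr ((hy x ⟨Ne.symm hxk, hx⟩).trans hnext.symm)

lemma exists_cyclicVert_succ_eq (hw : w.IsCycle) {v : V} (hv : v ∈ w.support) :
    ∃ k, w.cyclicVert (k + 1) = v := by
  obtain ⟨k, rfl⟩ := exists_cyclicVert_eq hv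
  have := hw.three_le_length
  exact ⟨k + w.length - 1, by rw [show k + w.length - 1 + 1 = k + w.length by omega,
    cyclicVert_add_length]⟩

lemma cyclicVert_mem_iff_three_dvd (hw : w.IsCycle) (hG : G.IsCycles) {D : Set V} (hu : u ∈ D)
    (hadjD : ∀ v ∈ D, ∀ x, G.Adj v x → x ∉ D)
    (hexD : ∀ v ∉ D, ∃ x ∈ D, G.Adj v x) (hexR : ∀ v ∉ D, ∃ x ∉ D, G.Adj v x) (k : ℕ) :
    w.cyclicVert k ∈ D ↔ 3 ∣ k := by
  have hstep : ∀ k, w.cyclicVert k ∈ D →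
      w.cyclicVert (k + 1) ∉ D ∧ w.cyclicVert (k + 2) ∉ D ∧ w.cyclicVert (k + 3) ∈ D := by
    intro k hk
    have h1 := hadjD _ hk _ (hw.adj_cyclicVert_succ k)
    obtain ⟨x, hxD, hx⟩ := hexR _ h1
    have h2 : w.cyclicVert (k + 2) ∉ D := by
      rcases hw.eq_or_eq_of_adj_cyclicVert hG hx with rfl | rfl
      · exact absurd hk hxD
      · exact hxD
    obtain ⟨y, hyD, hy⟩ := hexD _ h2
    refine ⟨h1, h2, ?_⟩
    rcases hw.eq_or_eq_of_adj_cyclicVert hG hy with rfl | rfl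
    · exact absurd hyD h1
    · exact hyD
  have hblock : ∀ m, w.cyclicVert (3 * m) ∈ D := by
    intro m
    induction m with
    | zero => simpa [cyclicVert] using hu
    | succ m ih => exact (hstep _ ih).2.2
  rw [← Nat.div_add_mod k 3]
  have := Nat.mod_lt k (show 0 < 3 by norm_num)
  interval_cases k % 3
  · simpa using hblock (k / 3)
  · simpa [Nat.dvd_add_right (dvd_mul_right 3 _)] using (hstep _ (hblock (k / 3))).1
  · simpa [Nat.dvd_add_right (dvd_mul_right 3 _)] using (hstep _ (hblock (k / 3))).2.1

lemma mem_redVerts_iff (hw : w.IsCycle) (h6 : 6 ∣ w.length) {k : ℕ} {v : V}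
    (hk : w.cyclicVert k = v) : v ∈ w.redVerts ↔ k % 6 < 3 := by
  refine ⟨fun ⟨j, hj, hj6⟩ => ?_, fun h => ⟨k, hk, h⟩⟩
  have hjk := hw.cyclicVert_eq_iff.mp (hj.trans hk.symm)
  rwa [← Nat.mod_mod_of_dvd j h6, hjk, Nat.mod_mod_of_dvd k h6] at hj6

lemma mem_redVerts_iff_of_adj_of_notMem (hw : w.IsCycle) (hG : G.IsCycles) (h6 : 6 ∣ w.length)
    {D : Set V} (hpat : ∀ k, w.cyclicVert k ∈ D ↔ 3 ∣ k) {x y : V} (hx : x ∈ w.support)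
    (hxy : G.Adj x y) (hxD : x ∉ D) (hyD : y ∉ D) : x ∈ w.redVerts ↔ y ∈ w.redVerts := by
  obtain ⟨k, rfl⟩ := hw.exists_cyclicVert_succ_eq hx
  rw [hpat] at hxD
  rw [hw.mem_redVerts_iff h6 rfl]
  rcases hw.eq_or_eq_of_adj_cyclicVert hG hxy with rfl | rfl <;>
    rw [hpat] at hyD <;> rw [hw.mem_redVerts_iff h6 rfl] <;> omega

lemma mem_redVerts_iff_notMem_of_adj_of_mem (hw : w.IsCycle) (hG : G.IsCycles)
    (h6 : 6 ∣ w.length) {D : Set V} (hpat : ∀ k, w.cyclicVert k ∈ D ↔ 3 ∣ k) {x a b : V}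
    (hx : x ∈ w.support) (hxD : x ∈ D) (ha : G.Adj x a) (hb : G.Adj x b) (hab : a ≠ b) :
    a ∈ w.redVerts ↔ b ∉ w.redVerts := by
  obtain ⟨k, rfl⟩ := hw.exists_cyclicVert_succ_eq hx
  rw [hpat] at hxD
  rcases hw.eq_or_eq_of_adj_cyclicVert hG ha with rfl | rfl <;>
    rcases hw.eq_or_eq_of_adj_cyclicVert hG hb with rfl | rfl <;>
    first
    | exact absurd rfl hab
    | rw [hw.mem_redVerts_iff h6 rfl, hw.mem_redVerts_iff h6 rfl]; omega
end IsCycle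

end Walk

lemma ncard_neighborSet_eq_degree (v : V) [Fintype (G.neighborSet v)] :
    (G.neighborSet v).ncard = G.degree v := by
  rw [← card_neighborSet_eq_degree, Set.ncard_eq_toFinset_card', Set.toFinset_card]

lemma isCycles_of_forall_degree_eq_two [∀ v, Fintype (G.neighborSet v)]
    (h : ∀ v, G.degree v = 2) : G.IsCycles := fun v _ => by
  rw [ncard_neighborSet_eq_degree, h]

lemma IsCycles.exists_isCycle_support_of_reachable [Finite V] (hG : G.IsCycles) {u x : V}
    (hux : G.Adj u x) : ∃ w : G.Walk u u, w.IsCycle ∧ ∀ v, G.Reachable u v → v ∈ w.support := by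
  obtain ⟨w, hw, hverts⟩ := hG.exists_cycle_toSubgraph_verts_eq_connectedComponentSupp
    (c := G.connectedComponentMk u) rfl ⟨x, hux⟩
  refine ⟨w, hw, fun v huv => ?_⟩
  rw [← Walk.mem_verts_toSubgraph, hverts]
  exact (ConnectedComponent.sound huv).symm

end SimpleGraph

open SimpleGraph

namespace DummyGraph

variable {W : Type*} {n : ℕ} {p q d : Fin n → W}

lemma p_ne_q (hbij : Function.Bijective (Sum.elim p (Sum.elim q d))) (i j : Fin n) :
    p i ≠ q j := fun h => by
  simpa using hbij.injective (a₁ := .inl i) (a₂ := .inr (.inl j)) h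

lemma p_ne_d (hbij : Function.Bijective (Sum.elim p (Sum.elim q d))) (i j : Fin n) :
    p i ≠ d j := fun h => by
  simpa using hbij.injective (a₁ := .inl i) (a₂ := .inr (.inr j)) h

lemma q_ne_d (hbij : Function.Bijective (Sum.elim p (Sum.elim q d))) (i j : Fin n) :
    q i ≠ d j := fun h => by
  simpa using hbij.injective (a₁ := .inr (.inl i)) (a₂ := .inr (.inr j)) h

lemma mem_range_union_iff_notMem_range (hbij : Function.Bijective (Sum.elim p (Sum.elim q d)))
    {v : W} : v ∈ Set.range p ∪ Set.range q ↔ v ∉ Set.range d := by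
  constructor
  · rintro (⟨i, rfl⟩ | ⟨i, rfl⟩) ⟨j, hj⟩
    exacts [p_ne_d hbij i j hj.symm, q_ne_d hbij i j hj.symm]
  · intro hv
    obtain ⟨i | i | i, rfl⟩ := hbij.surjective v
    exacts [Or.inl ⟨i, rfl⟩, Or.inr ⟨i, rfl⟩, absurd ⟨i, rfl⟩ hv]

variable {G F : SimpleGraph W}

lemma eq_of_adj_dummy (hbij : Function.Bijective (Sum.elim p (Sum.elim q d)))
    (hdummy : ∀ i x, G.Adj (d i) x ↔ (x = p i ∨ x = q i)) (hFsub : F ≤ G) {i j : Fin n} {x : W}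
    (hx : x = p i ∨ x = q i) (h : F.Adj (d j) x) : j = i := by
  have p_inj : Function.Injective p := hbij.injective.comp Sum.inl_injective
  have q_inj : Function.Injective q :=
    hbij.injective.comp (Sum.inr_injective.comp Sum.inl_injective)
  rcases hx with rfl | rfl <;> rcases (hdummy j _).mp (hFsub h) with h' | h'
  exacts [p_inj h'.symm, absurd h' (p_ne_q hbij i j), absurd h'.symm (p_ne_q hbij j i),
    q_inj h'.symm]

lemma adj_dummy_p_and_q (hbij : Function.Bijective (Sum.elim p (Sum.elim q d)))
    (hdummy : ∀ i x, G.Adj (d i) x ↔ (x = p i ∨ x = q i)) (hFsub : F ≤ G) (i : Fin n)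
    [Fintype (F.neighborSet (d i))] (hdeg : F.degree (d i) = 2) :
    F.Adj (d i) (p i) ∧ F.Adj (d i) (q i) := by
  have hsub : F.neighborSet (d i) ⊆ {p i, q i} := fun x hx => (hdummy i x).mp (hFsub hx)
  have heq := Set.eq_of_subset_of_ncard_le hsub (by
    rw [Set.ncard_pair (p_ne_q hbij i i), ncard_neighborSet_eq_degree, hdeg]) (Set.toFinite _)
  rw [← mem_neighborSet, ← mem_neighborSet, heq]
  exact ⟨Set.mem_insert _ _, Set.mem_insert_of_mem _ rfl⟩

lemma existsUnique_real_adj (hbij : Function.Bijective (Sum.elim p (Sum.elim q d)))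
    (hdummy : ∀ i x, G.Adj (d i) x ↔ (x = p i ∨ x = q i)) (hFsub : F ≤ G) (hF : F.IsCycles)
    (hdum : ∀ i, F.Adj (d i) (p i) ∧ F.Adj (d i) (q i)) {v : W}
    (hv : v ∈ Set.range p ∪ Set.range q) : ∃! u, u ∈ Set.range p ∪ Set.range q ∧ F.Adj v u := by
  obtain ⟨i, hvi⟩ : ∃ i, v = p i ∨ v = q i := by
    rcases hv with ⟨i, rfl⟩ | ⟨i, rfl⟩ <;> exact ⟨i, by simp⟩
  have hvd : F.Adj v (d i) := by
    rcases hvi with rfl | rfl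
    · exact (hdum i).1.symm
    · exact (hdum i).2.symm
  have hnd {x : W} (hx : x ∈ Set.range p ∪ Set.range q) : d i ≠ x :=
    fun h => (mem_range_union_iff_notMem_range hbij).mp hx ⟨i, h⟩
  obtain ⟨u, hu, hvu⟩ := hF.other_adj_of_adj hvd
  have hureal : u ∈ Set.range p ∪ Set.range q := by
    refine (mem_range_union_iff_notMem_range hbij).mpr ?_
    rintro ⟨j, rfl⟩
    exact hu (congrArg d (eq_of_adj_dummy hbij hdummy hFsub hvi hvu.symm).symm)
  obtain ⟨y, -, hy⟩ := hF.existsUnique_ne_adj hvd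
  exact ⟨u, ⟨hureal, hvu⟩, fun x ⟨hx, hvx⟩ =>
    (hy x ⟨hnd hx, hvx⟩).trans (hy u ⟨hu, hvu⟩).symm⟩

lemma exists_dummy_isCycle [Finite W] (hbij : Function.Bijective (Sum.elim p (Sum.elim q d)))
    (hF : F.IsCycles) (hdum : ∀ i, F.Adj (d i) (p i) ∧ F.Adj (d i) (q i))
    (C : F.ConnectedComponent) : ∃ (i : Fin n) (w : F.Walk (d i) (d i)),
      w.IsCycle ∧ ∀ v, F.connectedComponentMk v = C → v ∈ w.support := by
  obtain ⟨v, rfl⟩ := C.exists_rep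
  obtain ⟨i, hiv⟩ : ∃ i, F.Reachable (d i) v := by
    obtain ⟨i | i | i, rfl⟩ := hbij.surjective v
    exacts [⟨i, (hdum i).1.reachable⟩, ⟨i, (hdum i).2.reachable⟩, ⟨i, .rfl⟩]
  obtain ⟨w, hw, hsupp⟩ := hF.exists_isCycle_support_of_reachable (hdum i).1
  exact ⟨i, w, hw, fun x hx => hsupp x (hiv.trans (ConnectedComponent.exact hx.symm))⟩

lemma cyclicVert_mem_range_iff (hbij : Function.Bijective (Sum.elim p (Sum.elim q d)))
    (hdummy : ∀ i x, G.Adj (d i) x ↔ (x = p i ∨ x = q i)) (hFsub : F ≤ G) (hF : F.IsCycles)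
    (hdum : ∀ i, F.Adj (d i) (p i) ∧ F.Adj (d i) (q i)) {i : Fin n} {w : F.Walk (d i) (d i)}
    (hw : w.IsCycle) (k : ℕ) : w.cyclicVert k ∈ Set.range d ↔ 3 ∣ k := by
  have hreal (v : W) := mem_range_union_iff_notMem_range hbij (v := v)
  refine hw.cyclicVert_mem_iff_three_dvd hF (D := Set.range d) ⟨i, rfl⟩ ?_ ?_ ?_ k
  · rintro _ ⟨j, rfl⟩ x hx
    rcases (hdummy j x).mp (hFsub hx) with rfl | rfl
    exacts [(hreal _).mp (Or.inl ⟨j, rfl⟩), (hreal _).mp (Or.inr ⟨j, rfl⟩)]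
  · intro v hv
    obtain ⟨j, rfl⟩ | ⟨j, rfl⟩ := (hreal v).mpr hv
    exacts [⟨d j, ⟨j, rfl⟩, (hdum j).1.symm⟩, ⟨d j, ⟨j, rfl⟩, (hdum j).2.symm⟩]
  · intro v hv
    obtain ⟨u, ⟨hu, hvu⟩, -⟩ := existsUnique_real_adj hbij hdummy hFsub hF hdum ((hreal v).mpr hv)
    exact ⟨u, (hreal u).mp hu, hvu⟩

end DummyGraph

open DummyGraph

open scoped Classical

theorem stmt_19_general {W : Type*} [Fintype W] {n : ℕ}
    (p q d : Fin n → W)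
    (hbij : Function.Bijective (Sum.elim p (Sum.elim q d)))
    (G : SimpleGraph W)
    (hdummy : ∀ i x, G.Adj (d i) x ↔ (x = p i ∨ x = q i))
    (F : SimpleGraph W) (hFsub : F ≤ G)
    (hdeg : ∀ v : W, F.degree v = 2)
    (hcyc : ∀ (v : W) (c : F.Walk v v), c.IsCycle → 6 ∣ c.length) :
    (∀ i, F.Adj (d i) (p i) ∧ F.Adj (d i) (q i)) ∧
    (∀ v ∈ Set.range p ∪ Set.range q,
      ∃! u, u ∈ Set.range p ∪ Set.range q ∧ F.Adj v u) ∧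
    (∃ B : Set W, (∀ i, (p i ∈ B ↔ q i ∉ B)) ∧
      ∀ u v, u ∈ Set.range p ∪ Set.range q → v ∈ Set.range p ∪ Set.range q →
        F.Adj u v → (u ∈ B ↔ v ∈ B)) := by
  have hF := isCycles_of_forall_degree_eq_two hdeg
  have hdum i := adj_dummy_p_and_q hbij hdummy hFsub i (hdeg (d i))
  refine ⟨hdum, fun v => existsUnique_real_adj hbij hdummy hFsub hF hdum, ?_⟩
  choose i w hw hsupp using exists_dummy_isCycle hbij hF hdum
  have hpat C := cyclicVert_mem_range_iff hbij hdummy hFsub hF hdum (hw C)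
  refine ⟨{v | v ∈ (w (F.connectedComponentMk v)).redVerts}, fun j => ?_,
    fun u v hu hv huv => ?_⟩
  · have hp := ConnectedComponent.sound (hdum j).1.symm.reachable
    have hq := ConnectedComponent.sound (hdum j).2.symm.reachable
    simp only [Set.mem_ofPred_eq]
    rw [hp, hq]
    exact (hw _).mem_redVerts_iff_notMem_of_adj_of_mem hF (hcyc _ _ (hw _)) (hpat _)
      (hsupp _ _ rfl) ⟨j, rfl⟩ (hdum j).1 (hdum j).2 (p_ne_q hbij j j)
  · simp only [Set.mem_ofPred_eq]
    rw [ConnectedComponent.sound huv.symm.reachable]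
    exact (hw _).mem_redVerts_iff_of_adj_of_notMem hF (hcyc _ _ (hw _)) (hpat _)
      (hsupp _ _ rfl) huv ((mem_range_union_iff_notMem_range hbij).mp hu)
      ((mem_range_union_iff_notMem_range hbij).mp hv)

theorem stmt_19 {W : Type*} [Fintype W] {n : ℕ} (hn : 0 < n) (heven : Even n)
    (p q d : Fin n → W)
    (hbij : Function.Bijective (Sum.elim p (Sum.elim q d)))
    (G : SimpleGraph W)
    (hdummy : ∀ i x, G.Adj (d i) x ↔ (x = p i ∨ x = q i))
    (F : SimpleGraph W) (hFsub : F ≤ G)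
    (hdeg : ∀ v : W, F.degree v = 2)
    (hcyc : ∀ (v : W) (c : F.Walk v v), c.IsCycle → 6 ∣ c.length) :
    (∀ i, F.Adj (d i) (p i) ∧ F.Adj (d i) (q i)) ∧
    (∀ v ∈ Set.range p ∪ Set.range q,
      ∃! u, u ∈ Set.range p ∪ Set.range q ∧ F.Adj v u) ∧
    (∃ B : Set W, (∀ i, (p i ∈ B ↔ q i ∉ B)) ∧
      ∀ u v, u ∈ Set.range p ∪ Set.range q → v ∈ Set.range p ∪ Set.range q →
        F.Adj u v → (u ∈ B ↔ v ∈ B)) :=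
  stmt_19_general p q d hbij G hdummy F hFsub hdeg hcyc
end
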